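/- Let X be a real Banach space whose modulus of smoothness satisfies ρ(u) ≤ γ u^q for all u > 0, where 1 < q ≤ 2 and γ > 0 is a constant, let D be a dictionary in X, and let f ∈ A_1(D). Suppose (f_m)_{m≥0} is generated by the Rescaled Pure Greedy Algorithm RPGA(D) for f: f_0 = 0, and for each m ≥ 1, if f_{m−1} = f then f_m := f; otherwise, with F_{f−f_{m−1}} a norming functional of f − f_{m−1}, choose φ_m ∈ D with |F_{f−f_{m−1}}(φ_m)| = sup_{φ∈D} |F_{f−f_{m−1}}(φ)|, set λ_m := sign(F_{f−f_{m−1}}(φ_m)) · ‖f − f_{m−1}‖ · (2γq)^{1/(1−q)} · |F_{f−f_{m−1}}(φ_m)|^{1/(q−1)}, ĥ_m := f_{m−1} + λ_m φ_m, choose s_m ∈ ℝ with ‖f − s_m ĥ_m‖ = min_{s∈ℝ} ‖f − s ĥ_m‖, and set f_m := s_m ĥ_m. Then there is a constant c = c(γ, q) such that for every m ≥ 2, ‖f − f_m‖ ≤ c · |f|_{A_1(D)} · m^{1/q − 1}. -/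

import Mathlib

open scoped BigOperators

universe u

/-- A dictionary in a normed space: a set of norm-one elements with dense linear span. -/
def IsDictionary (X : Type u) [NormedAddCommGroup X] [NormedSpace ℝ X] (D : Set X) : Prop :=
  (∀ φ ∈ D, ‖φ‖ = 1) ∧ Dense (Submodule.span ℝ D : Set X)

/-- Finite linear combinations of dictionary elements with coefficients of total
absolute sum at most `M`. -/
def A1Pre (X : Type u) [NormedAddCommGroup X] [NormedSpace ℝ X] (D : Set X) (M : ℝ) : Set X :=
  {g | ∃ (n : ℕ) (c : Fin n → ℝ) (φ : Fin n → X),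
    (∀ i, φ i ∈ D) ∧ (∑ i, |c i|) ≤ M ∧ g = ∑ i, c i • φ i}

/-- The class `A₁(D, M)`: the closure of `A1Pre`. -/
def A1 (X : Type u) [NormedAddCommGroup X] [NormedSpace ℝ X] (D : Set X) (M : ℝ) : Set X :=
  closure (A1Pre X D M)

/-- The class `A₁(D)`: the union of the classes `A₁(D, M)` over all `M > 0`. -/
def A1Class (X : Type u) [NormedAddCommGroup X] [NormedSpace ℝ X] (D : Set X) : Set X :=
  ⋃ M ∈ Set.Ioi (0 : ℝ), A1 X D M

/-- The "semi-norm" `|f|_{A₁(D)} = inf {M : f ∈ A₁(D, M)}`. -/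
noncomputable def A1Norm (X : Type u) [NormedAddCommGroup X] [NormedSpace ℝ X]
    (D : Set X) (f : X) : ℝ :=
  sInf {M : ℝ | 0 < M ∧ f ∈ A1 X D M}

/-- The modulus of smoothness of a real normed space `X`:
`ρ(u) = sup{(‖f + u g‖ + ‖f − u g‖)/2 − 1 : ‖f‖ = ‖g‖ = 1}`. -/
noncomputable def modulusOfSmoothness (X : Type u) [NormedAddCommGroup X] [NormedSpace ℝ X]
    (u : ℝ) : ℝ :=
  sSup {x : ℝ | ∃ f g : X, ‖f‖ = 1 ∧ ‖g‖ = 1 ∧ x = (‖f + u • g‖ + ‖f - u • g‖) / 2 - 1}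

/-!
Let `r = f - f_{m-1}` and let `F` be a norming functional of `r`. Since `f_{m-1}` is the best
multiple of `ĥ_{m-1}`, the bound `ρ(u) ≤ γ u^q` with `q > 1` forces `F` to vanish on `f_{m-1}`, so
`‖r‖ = F f ≤ |f|_{A₁(D)} · |F φ_m|`. The same smoothness bound, applied to `r - λ_m φ_m` with the
step size `λ_m` that minimises it, gives `‖f - f_m‖ ≤ ‖r‖ (1 - c |F φ_m|^p)` with `p = q/(q-1)`.
Hence the normalised errors `a_m = ‖f - f_m‖ / |f|_{A₁(D)}` satisfy
`a_m ≤ a_{m-1}(1 - c a_{m-1}^p)`, and comparing `(1 - a)^p` with `exp (-p a)` yields `a_m^p (1 + p c m) ≤ 1`.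
-/

open Filter Topology

section Smoothness

variable {X : Type*} [NormedAddCommGroup X] [NormedSpace ℝ X]

lemma le_modulusOfSmoothness {f g : X} (hf : ‖f‖ = 1) (hg : ‖g‖ = 1) (u : ℝ) :
    (‖f + u • g‖ + ‖f - u • g‖) / 2 - 1 ≤ modulusOfSmoothness X u := by
  refine le_csSup ⟨|u|, ?_⟩ ⟨f, g, hf, hg, rfl⟩
  rintro x ⟨f₀, g₀, hf₀, hg₀, rfl⟩
  have hplus := norm_add_le f₀ (u • g₀)
  have hminus := norm_sub_le f₀ (u • g₀)
  rw [norm_smul, hf₀, hg₀, mul_one, Real.norm_eq_abs] at hplus hminus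
  linarith

lemma norm_add_add_norm_sub_le_modulusOfSmoothness {a b : X} (ha : a ≠ 0) (hb : b ≠ 0)
    (u : ℝ) :
    ‖a + u • b‖ + ‖a - u • b‖ ≤ 2 * ‖a‖ * (1 + modulusOfSmoothness X (u * ‖b‖ / ‖a‖)) := by
  have ha' : 0 < ‖a‖ := norm_pos_iff.2 ha
  have hb' : 0 < ‖b‖ := norm_pos_iff.2 hb
  have hunit : ∀ {x : X}, 0 < ‖x‖ → ‖‖x‖⁻¹ • x‖ = 1 := fun hx => by
    rw [norm_smul, norm_inv, norm_norm, inv_mul_cancel₀ hx.ne']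
  have hscale : ∀ ε : ℝ, a + ε • u • b =
      ‖a‖ • (‖a‖⁻¹ • a + ε • (u * ‖b‖ / ‖a‖) • ‖b‖⁻¹ • b) := fun ε => by
    rw [smul_add, smul_inv_smul₀ ha'.ne']
    simp only [smul_smul]
    congr 2
    field_simp
  have key := le_modulusOfSmoothness (hunit ha') (hunit hb') (u * ‖b‖ / ‖a‖)
  have hplus := hscale 1
  have hminus := hscale (-1)
  simp only [one_smul, neg_smul, ← sub_eq_add_neg] at hplus hminus
  rw [hplus, hminus, norm_smul, norm_smul, norm_norm]
  nlinarith

lemma norm_sub_smul_le_of_norming {γ q : ℝ}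
    (hρ : ∀ u : ℝ, 0 < u → modulusOfSmoothness X u ≤ γ * u ^ q)
    {F : X →L[ℝ] ℝ} (hF : ‖F‖ ≤ 1) {r : X} (hFr : F r = ‖r‖) (hr : r ≠ 0)
    {b : X} (hb : b ≠ 0) {t : ℝ} (ht : 0 < t) :
    ‖r - t • b‖ ≤ ‖r‖ - t * F b + 2 * γ * ‖r‖ * (t * ‖b‖ / ‖r‖) ^ q := by
  have hsmooth := norm_add_add_norm_sub_le_modulusOfSmoothness hr hb t
  have hρt := mul_le_mul_of_nonneg_left
    (hρ _ (div_pos (mul_pos ht (norm_pos_iff.2 hb)) (norm_pos_iff.2 hr)))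
    (norm_nonneg r)
  have hlow : ‖r‖ + t * F b ≤ ‖r + t • b‖ := by
    calc ‖r‖ + t * F b = F (r + t • b) := by rw [map_add, map_smul, hFr, smul_eq_mul]
      _ ≤ ‖r + t • b‖ := (le_abs_self _).trans (by simpa using F.le_of_opNorm_le hF (r + t • b))
  linarith

end Smoothness

lemma nonpos_of_forall_mul_le_mul_rpow {a K q : ℝ} (hq : 1 < q)
    (h : ∀ t : ℝ, 0 < t → a * t ≤ K * t ^ q) : a ≤ 0 := by
  have hlim : Tendsto (fun t : ℝ => K * t ^ (q - 1)) (𝓝[>] 0) (𝓝 0) := by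
    have := (Real.continuousAt_rpow_const 0 (q - 1) (Or.inr (by linarith))).tendsto
    simpa [Real.zero_rpow (by linarith : q - 1 ≠ 0)] using
      (this.mono_left nhdsWithin_le_nhds).const_mul K
  refine ge_of_tendsto hlim (eventually_nhdsWithin_of_forall fun t (ht : 0 < t) => ?_)
  have := h t ht
  rw [show q = (q - 1) + 1 by ring, Real.rpow_add ht, Real.rpow_one, ← mul_assoc] at this
  exact le_of_mul_le_mul_right this ht

lemma Real.sign_mul_self_eq_abs (x : ℝ) : Real.sign x * x = |x| := by
  rcases lt_trichotomy x 0 with h | rfl | h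
  · rw [Real.sign_of_neg h, abs_of_neg h, neg_one_mul]
  · simp
  · rw [Real.sign_of_pos h, abs_of_pos h, one_mul]

lemma rpow_one_div_one_sub_mul_rpow_one_div_sub_one_rpow {A B q : ℝ} (hA : 0 < A) (hB : 0 < B)
    (hq : q ≠ 1) :
    (B ^ ((1 : ℝ) / (1 - q)) * A ^ ((1 : ℝ) / (q - 1))) ^ (q - 1) = A / B := by
  have hq' : q - 1 ≠ 0 := sub_ne_zero.2 hq
  rw [Real.mul_rpow (by positivity) (by positivity), ← Real.rpow_mul hB.le,
    ← Real.rpow_mul hA.le, one_div_mul_cancel hq', Real.rpow_one,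
    show 1 / (1 - q) * (q - 1) = -1 by field_simp; ring, Real.rpow_neg_one, div_eq_inv_mul]

section Norming

variable {X : Type*} [NormedAddCommGroup X] [NormedSpace ℝ X] {γ q : ℝ}
  {F : X →L[ℝ] ℝ} {r : X}

lemma norming_apply_nonpos_of_forall_le_norm_sub_smul (hq : 1 < q)
    (hρ : ∀ u : ℝ, 0 < u → modulusOfSmoothness X u ≤ γ * u ^ q)
    (hF : ‖F‖ ≤ 1) (hFr : F r = ‖r‖) (hr : r ≠ 0) (b : X)
    (hmin : ∀ t : ℝ, 0 < t → ‖r‖ ≤ ‖r - t • b‖) : F b ≤ 0 := by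
  rcases eq_or_ne b 0 with rfl | hb
  · simp
  refine nonpos_of_forall_mul_le_mul_rpow hq (K := 2 * γ * ‖r‖ * (‖b‖ / ‖r‖) ^ q) fun t ht => ?_
  have h := norm_sub_smul_le_of_norming hρ hF hFr hr hb ht
  rw [mul_div_assoc, Real.mul_rpow ht.le (by positivity)] at h
  linarith [hmin t ht]

lemma norming_apply_eq_zero_of_forall_norm_sub_smul_le (hq : 1 < q)
    (hρ : ∀ u : ℝ, 0 < u → modulusOfSmoothness X u ≤ γ * u ^ q) {f h : X} {s : ℝ}
    (hmin : ∀ s' : ℝ, ‖f - s • h‖ ≤ ‖f - s' • h‖)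
    (hF : ‖F‖ ≤ 1) (hFr : F (f - s • h) = ‖f - s • h‖) (hr : f - s • h ≠ 0) : F h = 0 := by
  have key := norming_apply_nonpos_of_forall_le_norm_sub_smul hq hρ hF hFr hr
  have hle : F h ≤ 0 := key h fun t _ => by
    simpa only [sub_sub, ← add_smul] using hmin (s + t)
  have hge : F (-h) ≤ 0 := key (-h) fun t _ => by
    simpa only [smul_neg, sub_neg_eq_add, sub_add, ← sub_smul] using hmin (s - t)
  rw [map_neg] at hge
  linarith

lemma norm_sub_greedy_step_le (hγ : 0 < γ) (hq : 1 < q)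
    (hρ : ∀ u : ℝ, 0 < u → modulusOfSmoothness X u ≤ γ * u ^ q)
    (hF : ‖F‖ ≤ 1) (hFr : F r = ‖r‖) (hr : r ≠ 0) {φ : X} (hφ : ‖φ‖ = 1) (hFφ : F φ ≠ 0) :
    ‖r - (Real.sign (F φ) * ‖r‖ * (2 * γ * q) ^ ((1 : ℝ) / (1 - q)) *
        |F φ| ^ ((1 : ℝ) / (q - 1))) • φ‖
      ≤ ‖r‖ * (1 - (2 * γ * q) ^ ((1 : ℝ) / (1 - q)) * (q - 1) / q *
        |F φ| ^ (q / (q - 1))) := by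
  set A := |F φ|
  set y := (2 * γ * q) ^ ((1 : ℝ) / (1 - q)) * A ^ ((1 : ℝ) / (q - 1)) with hydef
  have hA : 0 < A := abs_pos.2 hFφ
  have hr' : 0 < ‖r‖ := norm_pos_iff.2 hr
  have hy : 0 < y := by positivity
  have hσ : ‖Real.sign (F φ) • φ‖ = 1 := by
    rcases Real.sign_apply_eq_of_ne_zero _ hFφ with h | h <;> simp [h, hφ]
  have hFσ : F (Real.sign (F φ) • φ) = A := by
    rw [map_smul, smul_eq_mul, Real.sign_mul_self_eq_abs]
  have hstep := norm_sub_smul_le_of_norming hρ hF hFr hr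
    (ne_zero_of_norm_ne_zero (hσ.trans_ne one_ne_zero)) (mul_pos hr' hy)
  rw [hσ, hFσ, mul_one, mul_div_cancel_left₀ _ hr'.ne'] at hstep
  -- `y` is the minimiser of `2 γ y^q - A y`, the first-order condition being `2 γ q y^(q-1) = A`
  have hyq : y ^ q = y * (A / (2 * γ * q)) := by
    rw [show q = 1 + (q - 1) by ring, Real.rpow_add hy, Real.rpow_one, show 1 + (q - 1) = q by ring,
      rpow_one_div_one_sub_mul_rpow_one_div_sub_one_rpow hA (by positivity) hq.ne']
  have hyA : y * A = (2 * γ * q) ^ ((1 : ℝ) / (1 - q)) * A ^ (q / (q - 1)) := by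
    rw [hydef, mul_assoc, ← Real.rpow_add_one hA.ne',
      show 1 / (q - 1) + 1 = q / (q - 1) by field_simp [sub_ne_zero.2 hq.ne']; ring]
  calc _ = ‖r - (‖r‖ * y) • (Real.sign (F φ) • φ)‖ := by
        rw [smul_smul, hydef]; ring_nf
    _ ≤ ‖r‖ - ‖r‖ * y * A + 2 * γ * ‖r‖ * y ^ q := hstep
    _ = ‖r‖ * (1 - (q - 1) / q * (y * A)) := by
        rw [hyq]; field_simp; ring
    _ = _ := by rw [hyA]; ring

end Norming

section A1

variable {X : Type*} [NormedAddCommGroup X] [NormedSpace ℝ X] {D : Set X}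

lemma apply_le_mul_of_mem_A1 (F : X →L[ℝ] ℝ) {A M : ℝ} (hA : ∀ ψ ∈ D, |F ψ| ≤ A) (hA0 : 0 ≤ A)
    {g : X} (hg : g ∈ A1 X D M) : F g ≤ M * A := by
  refine closure_minimal (fun x hx => ?_) (isClosed_le F.continuous continuous_const) hg
  obtain ⟨n, c, φ, hφ, hc, rfl⟩ := hx
  simp only [Set.mem_ofPred_eq, map_sum, map_smul, smul_eq_mul]
  calc ∑ i, c i * F (φ i) ≤ ∑ i, |c i| * A := by
        refine Finset.sum_le_sum fun i _ => ?_
        calc c i * F (φ i) ≤ |c i| * |F (φ i)| := (le_abs_self _).trans (abs_mul _ _).le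
          _ ≤ |c i| * A := by gcongr; exact hA _ (hφ i)
    _ = (∑ i, |c i|) * A := (Finset.sum_mul _ _ _).symm
    _ ≤ M * A := by gcongr

lemma apply_le_A1Norm_mul {f : X} (hf : f ∈ A1Class X D) (F : X →L[ℝ] ℝ) {A : ℝ}
    (hA : ∀ ψ ∈ D, |F ψ| ≤ A) (hA0 : 0 ≤ A) : F f ≤ A1Norm X D f * A := by
  simp only [A1Class, Set.mem_iUnion, Set.mem_Ioi, exists_prop] at hf
  obtain ⟨M₀, hM₀, hfM₀⟩ := hf
  rcases hA0.eq_or_lt with rfl | hA0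
  · simpa using apply_le_mul_of_mem_A1 F hA le_rfl hfM₀
  rw [← div_le_iff₀ hA0]
  exact le_csInf ⟨M₀, hM₀, hfM₀⟩ fun M hM =>
    (div_le_iff₀ hA0).2 (apply_le_mul_of_mem_A1 F hA hA0.le hM.2)

lemma norm_le_A1Norm (hD : ∀ φ ∈ D, ‖φ‖ = 1) {f : X} (hf : f ∈ A1Class X D) :
    ‖f‖ ≤ A1Norm X D f := by
  obtain ⟨F, hF, hFf⟩ := exists_dual_vector'' ℝ f
  have hA : ∀ ψ ∈ D, |F ψ| ≤ 1 := fun ψ hψ => by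
    simpa [hD ψ hψ] using F.le_of_opNorm_le hF ψ
  simpa [hFf] using apply_le_A1Norm_mul hf F hA zero_le_one

end A1

section RPGA

variable {X : Type*} [NormedAddCommGroup X] [NormedSpace ℝ X]

/-- One step `f_{m-1} = g ↦ f_m = g'` of RPGA(D) for `f`, in the case `g ≠ f`. -/
def IsRPGAStep (γ q : ℝ) (D : Set X) (f g g' : X) : Prop :=
  ∃ (F : X →L[ℝ] ℝ) (φ : X) (lam s : ℝ),
    ‖F‖ = 1 ∧ F (f - g) = ‖f - g‖ ∧
    φ ∈ D ∧ |F φ| = sSup {x : ℝ | ∃ ψ ∈ D, x = |F ψ|} ∧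
    lam = Real.sign (F φ) * ‖f - g‖ * (2 * γ * q) ^ ((1 : ℝ) / (1 - q)) *
      |F φ| ^ ((1 : ℝ) / (q - 1)) ∧
    (∀ s' : ℝ, ‖f - s • (g + lam • φ)‖ ≤ ‖f - s' • (g + lam • φ)‖) ∧
    g' = s • (g + lam • φ)

variable {γ q : ℝ} {D : Set X} {f g g' : X}

lemma IsRPGAStep.norming_apply_eq_zero (hq : 1 < q)
    (hρ : ∀ u : ℝ, 0 < u → modulusOfSmoothness X u ≤ γ * u ^ q)
    (hstep : IsRPGAStep γ q D f g g') {F : X →L[ℝ] ℝ} (hF : ‖F‖ ≤ 1)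
    (hFr : F (f - g') = ‖f - g'‖) (hr : f - g' ≠ 0) : F g' = 0 := by
  obtain ⟨-, φ, lam, s, -, -, -, -, -, hmin, rfl⟩ := hstep
  rw [map_smul, norming_apply_eq_zero_of_forall_norm_sub_smul_le hq hρ hmin hF hFr hr, smul_zero]

lemma IsRPGAStep.norm_sub_le (hγ : 0 < γ) (hq : 1 < q)
    (hρ : ∀ u : ℝ, 0 < u → modulusOfSmoothness X u ≤ γ * u ^ q)
    (hD : ∀ φ ∈ D, ‖φ‖ = 1) (hf : f ∈ A1Class X D) (hstep : IsRPGAStep γ q D f g g')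
    (hg : ∀ F : X →L[ℝ] ℝ, ‖F‖ = 1 → F (f - g) = ‖f - g‖ → F g = 0) (hgf : g ≠ f) :
    ‖f - g'‖ ≤ ‖f - g‖ * (1 - (2 * γ * q) ^ ((1 : ℝ) / (1 - q)) * (q - 1) / q *
      (‖f - g‖ / A1Norm X D f) ^ (q / (q - 1))) := by
  obtain ⟨F, φ, lam, s, hF, hFr, hφD, hφmax, rfl, hmin, rfl⟩ := hstep
  have hr : 0 < ‖f - g‖ := norm_pos_iff.2 (sub_ne_zero.2 hgf.symm)
  have hFf : F f = ‖f - g‖ := by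
    have hFg := hg F hF hFr
    rwa [map_sub, hFg, sub_zero] at hFr
  have hle_one : ∀ ψ ∈ D, |F ψ| ≤ 1 := fun ψ hψ => by
    simpa [hD ψ hψ] using F.le_of_opNorm_le hF.le ψ
  have hle_max : ∀ ψ ∈ D, |F ψ| ≤ |F φ| := fun ψ hψ =>
    hφmax ▸ le_csSup ⟨1, by rintro _ ⟨ψ', hψ', rfl⟩; exact hle_one ψ' hψ'⟩ ⟨ψ, hψ, rfl⟩
  have hN : 0 ≤ A1Norm X D f := (norm_nonneg f).trans (norm_le_A1Norm hD hf)
  have hfA : ‖f - g‖ ≤ A1Norm X D f * |F φ| := hFf ▸ apply_le_A1Norm_mul hf F hle_max (abs_nonneg _)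
  have hA : 0 < |F φ| := pos_of_mul_pos_right (hr.trans_le hfA) hN
  calc _ ≤ ‖(f - g) - _ • φ‖ := by
        simpa only [one_smul, sub_add_eq_sub_sub] using hmin 1
    _ ≤ ‖f - g‖ * (1 - (2 * γ * q) ^ ((1 : ℝ) / (1 - q)) * (q - 1) / q * |F φ| ^ (q / (q - 1))) :=
        norm_sub_greedy_step_le hγ hq hρ hF.le hFr (sub_ne_zero.2 hgf.symm) (hD φ hφD)
          (abs_pos.1 hA)
    _ ≤ _ := by
        gcongr
        exact div_le_of_le_mul₀ hN hA.le (by rwa [mul_comm])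

end RPGA

lemma one_sub_rpow_mul_one_add_mul_le_one {a p : ℝ} (ha₀ : 0 ≤ a) (ha₁ : a ≤ 1) (hp : 0 ≤ p) :
    (1 - a) ^ p * (1 + p * a) ≤ 1 := by
  calc (1 - a) ^ p * (1 + p * a) ≤ Real.exp (-a) ^ p * Real.exp (p * a) := by
        gcongr
        · linarith [Real.add_one_le_exp (-a)]
        · linarith [Real.add_one_le_exp (p * a)]
    _ = 1 := by rw [← Real.exp_mul, ← Real.exp_add]; ring_nf; exact Real.exp_zero

lemma rpow_mul_one_add_le_one_of_le_mul_one_sub {x : ℕ → ℝ} {c p : ℝ} (hc : 0 ≤ c) (hp : 0 < p)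
    (hx : ∀ k, 0 ≤ x k) (hx₀ : x 0 ≤ 1) (hrec : ∀ k, x (k + 1) ≤ x k * (1 - c * x k ^ p))
    (m : ℕ) : x m ^ p * (1 + p * c * m) ≤ 1 := by
  induction m with
  | zero => simpa using Real.rpow_le_one (hx 0) hx₀ hp.le
  | succ m ih =>
    rcases le_or_gt 1 (c * x m ^ p) with ha | ha
    · have hzero : x (m + 1) = 0 := le_antisymm
        ((hrec m).trans (mul_nonpos_of_nonneg_of_nonpos (hx m) (by linarith))) (hx _)
      simp [hzero, Real.zero_rpow hp.ne']
    have hpow : x (m + 1) ^ p ≤ x m ^ p * (1 - c * x m ^ p) ^ p := by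
      rw [← Real.mul_rpow (hx m) (by linarith)]
      exact Real.rpow_le_rpow (hx _) (hrec m) hp.le
    calc x (m + 1) ^ p * (1 + p * c * ↑(m + 1))
        ≤ x m ^ p * (1 - c * x m ^ p) ^ p * (1 + p * c * ↑(m + 1)) := by gcongr
      _ = (1 - c * x m ^ p) ^ p * (x m ^ p * (1 + p * c * m) + p * (c * x m ^ p)) := by
        push_cast; ring
      _ ≤ (1 - c * x m ^ p) ^ p * (1 + p * (c * x m ^ p)) := by gcongr
      _ ≤ 1 := one_sub_rpow_mul_one_add_mul_le_one
        (mul_nonneg hc (Real.rpow_nonneg (hx m) p)) ha.le hp.le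

lemma le_mul_one_add_rpow_of_le_mul_one_sub {e : ℕ → ℝ} {N c p : ℝ} (hN : 0 ≤ N) (hc : 0 ≤ c)
    (hp : 0 < p) (he : ∀ k, 0 ≤ e k) (he₀ : e 0 ≤ N)
    (hrec : ∀ k, e (k + 1) ≤ e k * (1 - c * (e k / N) ^ p)) (m : ℕ) :
    e m ≤ N * (1 + p * c * m) ^ (-p⁻¹) := by
  rcases hN.eq_or_lt with rfl | hN
  · have hzero : ∀ k, e k = 0 := fun k => by
      induction k with
      | zero => exact le_antisymm he₀ (he 0)
      | succ k ih => exact le_antisymm (by simpa [ih] using hrec k) (he _)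
    simp [hzero]
  have hx := rpow_mul_one_add_le_one_of_le_mul_one_sub hc hp (x := fun k => e k / N)
    (fun k => div_nonneg (he k) hN.le) ((div_le_one hN).2 he₀)
    (fun k => by rw [div_mul_eq_mul_div]; exact div_le_div_of_nonneg_right (hrec k) hN.le) m
  have hK : 0 < 1 + p * c * m := by positivity
  rw [← div_le_iff₀' hN, Real.rpow_neg hK.le, ← Real.inv_rpow hK.le,
    Real.le_rpow_inv_iff_of_pos (div_nonneg (he m) hN.le) (by positivity) hp, ← one_div,
    le_div_iff₀ hK]
  exact hx

theorem rpga_banach_rate_general (γ q : ℝ) (hq1 : 1 < q) (hγ : 0 < γ) :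
    ∃ c : ℝ, 0 < c ∧
      ∀ (X : Type u) [NormedAddCommGroup X] [NormedSpace ℝ X] [CompleteSpace X]
        (D : Set X), IsDictionary X D →
        (∀ u : ℝ, 0 < u → modulusOfSmoothness X u ≤ γ * u ^ q) →
        ∀ f ∈ A1Class X D, ∀ fseq : ℕ → X, fseq 0 = 0 →
        (∀ m : ℕ,
          (fseq m = f → fseq (m + 1) = f) ∧
          (fseq m ≠ f → ∃ (F : X →L[ℝ] ℝ) (φ : X) (lam s : ℝ),
            ‖F‖ = 1 ∧ F (f - fseq m) = ‖f - fseq m‖ ∧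
            φ ∈ D ∧ |F φ| = sSup {x : ℝ | ∃ ψ ∈ D, x = |F ψ|} ∧
            lam = Real.sign (F φ) * ‖f - fseq m‖ * (2 * γ * q) ^ ((1 : ℝ) / (1 - q)) *
              |F φ| ^ ((1 : ℝ) / (q - 1)) ∧
            (∀ s' : ℝ, ‖f - s • (fseq m + lam • φ)‖ ≤ ‖f - s' • (fseq m + lam • φ)‖) ∧
            fseq (m + 1) = s • (fseq m + lam • φ))) →
        ∀ m : ℕ, 2 ≤ m →
          ‖f - fseq m‖ ≤ c * A1Norm X D f * (m : ℝ) ^ ((1 : ℝ) / q - 1) := by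
  set p := q / (q - 1) with hp
  set c := (2 * γ * q) ^ ((1 : ℝ) / (1 - q)) * (q - 1) / q
  have hq : 0 < q - 1 := sub_pos.2 hq1
  have hp0 : 0 < p := by positivity
  have hc0 : 0 < c := by positivity
  have hexp : -p⁻¹ = (1 : ℝ) / q - 1 := by
    rw [hp, inv_div]
    field_simp
    ring
  refine ⟨(p * c) ^ (-p⁻¹), by positivity, ?_⟩
  intro X _ _ _ D hD hρ f hf fseq h0 hstep m hm
  have hperp : ∀ k, fseq k ≠ f → ∀ F : X →L[ℝ] ℝ, ‖F‖ = 1 →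
      F (f - fseq k) = ‖f - fseq k‖ → F (fseq k) = 0 := by
    rintro (_ | k) hk F hF hFr
    · rw [h0, map_zero]
    · exact IsRPGAStep.norming_apply_eq_zero hq1 hρ ((hstep k).2 fun h => hk ((hstep k).1 h))
        hF.le hFr (sub_ne_zero.2 hk.symm)
  have hrec : ∀ k, ‖f - fseq (k + 1)‖ ≤
      ‖f - fseq k‖ * (1 - c * (‖f - fseq k‖ / A1Norm X D f) ^ p) := fun k => by
    by_cases hk : fseq k = f
    · simp [(hstep k).1 hk, hk]
    · exact IsRPGAStep.norm_sub_le hγ hq1 hρ hD.1 hf ((hstep k).2 hk) (hperp k hk) hk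
  have hN := norm_le_A1Norm hD.1 hf
  have hN0 := (norm_nonneg f).trans hN
  have hm0 : (0 : ℝ) < m := by positivity
  calc ‖f - fseq m‖ ≤ A1Norm X D f * (1 + p * c * m) ^ (-p⁻¹) :=
        le_mul_one_add_rpow_of_le_mul_one_sub (e := fun k => ‖f - fseq k‖) hN0 hc0.le hp0
          (fun k => norm_nonneg _) (by simpa [h0] using hN) hrec m
    _ ≤ A1Norm X D f * (p * c * m) ^ (-p⁻¹) := mul_le_mul_of_nonneg_left
        (Real.rpow_le_rpow_of_nonpos (by positivity) (by linarith) (by simpa using hp0.le)) hN0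
    _ = (p * c) ^ (-p⁻¹) * A1Norm X D f * (m : ℝ) ^ ((1 : ℝ) / q - 1) := by
        rw [Real.mul_rpow (by positivity) hm0.le, hexp]
        ring

/-- Convergence rate of the Rescaled Pure Greedy Algorithm RPGA(D) in a Banach space `X`
with modulus of smoothness `ρ(u) ≤ γ u^q`, `1 < q ≤ 2`: there is a constant `c = c(γ, q)`
such that for `f ∈ A₁(D)` the output `(f_m)` satisfies
`‖f − f_m‖ ≤ c · |f|_{A₁(D)} · m^{1/q − 1}` for all `m ≥ 2`. -/
theorem rpga_banach_rate (γ q : ℝ) (hq1 : 1 < q) (hq2 : q ≤ 2) (hγ : 0 < γ) :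
    ∃ c : ℝ, 0 < c ∧
      ∀ (X : Type u) [NormedAddCommGroup X] [NormedSpace ℝ X] [CompleteSpace X]
        (D : Set X), IsDictionary X D →
        (∀ u : ℝ, 0 < u → modulusOfSmoothness X u ≤ γ * u ^ q) →
        ∀ f ∈ A1Class X D, ∀ fseq : ℕ → X, fseq 0 = 0 →
        (∀ m : ℕ,
          (fseq m = f → fseq (m + 1) = f) ∧
          (fseq m ≠ f → ∃ (F : X →L[ℝ] ℝ) (φ : X) (lam s : ℝ),
            ‖F‖ = 1 ∧ F (f - fseq m) = ‖f - fseq m‖ ∧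
            φ ∈ D ∧ |F φ| = sSup {x : ℝ | ∃ ψ ∈ D, x = |F ψ|} ∧
            lam = Real.sign (F φ) * ‖f - fseq m‖ * (2 * γ * q) ^ ((1 : ℝ) / (1 - q)) *
              |F φ| ^ ((1 : ℝ) / (q - 1)) ∧
            (∀ s' : ℝ, ‖f - s • (fseq m + lam • φ)‖ ≤ ‖f - s' • (fseq m + lam • φ)‖) ∧
            fseq (m + 1) = s • (fseq m + lam • φ))) →
        ∀ m : ℕ, 2 ≤ m →
          ‖f - fseq m‖ ≤ c * A1Norm X D f * (m : ℝ) ^ ((1 : ℝ) / q - 1) :=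
  rpga_banach_rate_general γ q hq1 hγ
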